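/- Let α₂ > 0 and F(z) = −2α₂·∫₀^z D(y) dy, where D is Dawson's integral. Then |F(z)| / (α₂·log|z|) → 1 as |z| → ∞. -/

import Mathlib

open Filter

noncomputable section

/-- Dawson's integral `D(z) = exp(−z²)·∫₀^z exp(y²) dy`. -/
def dawson (z : ℝ) : ℝ := Real.exp (-z ^ 2) * ∫ y in (0:ℝ)..z, Real.exp (y ^ 2)

/-- `F(z) = −2α₂·∫₀^z D(y) dy`. -/
def Ffun (α₂ z : ℝ) : ℝ := -2 * α₂ * ∫ y in (0:ℝ)..z, dawson y

/-!
Dawson's function solves `D' = 1 - 2zD`, so `D = 1/(2z) - D'/(2z)`, and integrating by parts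
suggests the remainder `R(z) = ∫₀^z D - (log z)/2 + D(z)/(2z)`, whose derivative is `-D/(2z²)`.
Since `0 ≤ D(z) ≤ 1/z` (compare `exp (t²)` with `exp (zt)` on `[0, z]`), `R` is antitone while
`R(z) - 1/(4z²)` is monotone on `(0, ∞)`, so `R` is bounded on `[1, ∞)` and
`∫₀^z D = (log z)/2 + O(1)`. As `D` is odd, `∫₀^z D` is even, which handles `z → -∞`.
-/

open Real intervalIntegral

lemma hasDerivAt_integral_exp_sq (y : ℝ) :
    HasDerivAt (fun z => ∫ t in (0:ℝ)..z, exp (t ^ 2)) (exp (y ^ 2)) y := by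
  have h : Continuous fun t : ℝ => exp (t ^ 2) := by fun_prop
  exact integral_hasDerivAt_right (h.intervalIntegrable _ _) (h.stronglyMeasurableAtFilter _ _)
    h.continuousAt

lemma hasDerivAt_dawson (y : ℝ) : HasDerivAt dawson (1 - 2 * y * dawson y) y := by
  have h : HasDerivAt (fun z => exp (-z ^ 2)) (-(exp (-y ^ 2) * (2 * y))) y := by
    simpa using ((hasDerivAt_pow 2 y).neg).exp
  refine (h.mul (hasDerivAt_integral_exp_sq y)).congr_deriv ?_
  rw [← exp_add, neg_add_cancel, exp_zero, dawson]
  ring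

lemma continuous_dawson : Continuous dawson :=
  continuous_iff_continuousAt.2 fun y => (hasDerivAt_dawson y).continuousAt

lemma dawson_neg (y : ℝ) : dawson (-y) = -dawson y := by
  have h : ∫ t in (0:ℝ)..-y, exp (t ^ 2) = -∫ t in (0:ℝ)..y, exp (t ^ 2) := by
    have := integral_comp_neg (a := 0) (b := y) fun t => exp (t ^ 2)
    simp only [neg_sq, neg_zero] at this
    rw [integral_symm, ← this]
  rw [dawson, dawson, h, neg_sq, mul_neg]

lemma dawson_nonneg {y : ℝ} (hy : 0 ≤ y) : 0 ≤ dawson y :=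
  mul_nonneg (exp_pos _).le (integral_nonneg hy fun _ _ => (exp_pos _).le)

lemma dawson_le_inv {y : ℝ} (hy : 0 < y) : dawson y ≤ y⁻¹ := by
  have hA : ∫ t in (0:ℝ)..y, exp (t ^ 2) ≤ ∫ t in (0:ℝ)..y, exp (y * t) := by
    refine integral_mono_on hy.le (by apply Continuous.intervalIntegrable; fun_prop)
      (by apply Continuous.intervalIntegrable; fun_prop) fun t ht => ?_
    exact exp_le_exp.2 (by nlinarith [ht.1, ht.2])
  have hB : ∫ t in (0:ℝ)..y, exp (y * t) = y⁻¹ * (exp (y ^ 2) - 1) := by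
    rw [integral_comp_mul_left (fun t => exp t) hy.ne', integral_exp]
    simp [sq]
  calc dawson y ≤ exp (-y ^ 2) * (y⁻¹ * (exp (y ^ 2) - 1)) :=
        mul_le_mul_of_nonneg_left (hA.trans hB.le) (exp_pos _).le
    _ = y⁻¹ * (1 - exp (-y ^ 2)) := by
        rw [mul_sub, exp_neg]; field_simp
    _ ≤ y⁻¹ := mul_le_of_le_one_right (inv_pos.2 hy).le (by linarith [exp_pos (-y ^ 2)])

def dawsonPrimitive (z : ℝ) : ℝ := ∫ y in (0:ℝ)..z, dawson y

lemma hasDerivAt_dawsonPrimitive (y : ℝ) : HasDerivAt dawsonPrimitive (dawson y) y :=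
  integral_hasDerivAt_right (continuous_dawson.intervalIntegrable _ _)
    (continuous_dawson.stronglyMeasurableAtFilter _ _) continuous_dawson.continuousAt

lemma dawsonPrimitive_neg (z : ℝ) : dawsonPrimitive (-z) = dawsonPrimitive z := by
  have := integral_comp_neg (a := 0) (b := z) dawson
  simp only [dawson_neg, integral_neg, neg_zero] at this
  rw [dawsonPrimitive, dawsonPrimitive, integral_symm, ← this, neg_neg]

lemma dawsonPrimitive_abs (z : ℝ) : dawsonPrimitive |z| = dawsonPrimitive z := by
  rcases abs_choice z with h | h <;> simp only [h, dawsonPrimitive_neg]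

def dawsonRemainder (z : ℝ) : ℝ := dawsonPrimitive z - log z / 2 + dawson z / (2 * z)

lemma hasDerivAt_dawsonRemainder {y : ℝ} (hy : 0 < y) :
    HasDerivAt dawsonRemainder (-(dawson y / (2 * y ^ 2))) y := by
  have h := (((hasDerivAt_dawsonPrimitive y).sub ((hasDerivAt_log hy.ne').div_const 2)).add
    ((hasDerivAt_dawson y).div ((hasDerivAt_id y).const_mul 2) (by positivity)))
  refine h.congr_deriv ?_
  simp only [id]
  field_simp
  ring

lemma antitoneOn_dawsonRemainder : AntitoneOn dawsonRemainder (Set.Ioi 0) := by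
  refine antitoneOn_of_hasDerivWithinAt_nonpos (convex_Ioi 0)
    (fun y hy => (hasDerivAt_dawsonRemainder hy).continuousAt.continuousWithinAt)
    (fun y hy => (hasDerivAt_dawsonRemainder (interior_subset hy)).hasDerivWithinAt) ?_
  rw [interior_Ioi]
  intro y (hy : 0 < y)
  have := dawson_nonneg hy.le
  exact neg_nonpos.2 (by positivity)

lemma monotoneOn_dawsonRemainder_sub_inv_sq :
    MonotoneOn (fun z => dawsonRemainder z - 1 / (4 * z ^ 2)) (Set.Ioi 0) := by
  have hderiv : ∀ y : ℝ, 0 < y → HasDerivAt (fun z => dawsonRemainder z - 1 / (4 * z ^ 2))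
      (-(dawson y / (2 * y ^ 2)) + 1 / (2 * y ^ 3)) y := by
    intro y hy
    have h := (hasDerivAt_dawsonRemainder hy).sub
      ((hasDerivAt_const y (1 : ℝ)).div ((hasDerivAt_pow 2 y).const_mul 4) (by positivity))
    refine h.congr_deriv ?_
    field_simp
    ring
  refine monotoneOn_of_hasDerivWithinAt_nonneg (convex_Ioi 0)
    (fun y hy => (hderiv y hy).continuousAt.continuousWithinAt)
    (fun y hy => (hderiv y (interior_subset hy)).hasDerivWithinAt) ?_
  rw [interior_Ioi]
  intro y (hy : 0 < y)
  have h := dawson_le_inv hy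
  rw [neg_add_eq_sub, sub_nonneg, div_le_div_iff₀ (by positivity) (by positivity)]
  have hyD : dawson y * y ≤ 1 := by rwa [← le_div_iff₀ hy, one_div]
  nlinarith [mul_le_mul_of_nonneg_right hyD (by positivity : (0:ℝ) ≤ 2 * y ^ 2)]

lemma isBigO_dawsonPrimitive_sub_log :
    (fun z => dawsonPrimitive z - log z / 2) =O[atTop] (fun _ => (1 : ℝ)) := by
  refine Asymptotics.IsBigO.of_bound (|dawsonRemainder 1| + 1) ?_
  filter_upwards [eventually_ge_atTop 1] with z hz
  have hz0 : 0 < z := zero_lt_one.trans_le hz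
  have h_le : dawsonRemainder z ≤ dawsonRemainder 1 :=
    antitoneOn_dawsonRemainder (Set.mem_Ioi.2 zero_lt_one) hz0 hz
  have h_ge : dawsonRemainder 1 - 1 / 4 ≤ dawsonRemainder z - 1 / (4 * z ^ 2) := by
    simpa using monotoneOn_dawsonRemainder_sub_inv_sq (Set.mem_Ioi.2 zero_lt_one) hz0 hz
  have hD_nonneg : 0 ≤ dawson z / (2 * z) := by have := dawson_nonneg hz0.le; positivity
  have hD_le : dawson z / (2 * z) ≤ 1 / 2 := by
    rw [div_le_iff₀ (by positivity)]
    nlinarith [dawson_le_inv hz0, inv_le_one_of_one_le₀ hz]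
  have hz2 : 0 ≤ 1 / (4 * z ^ 2) := by positivity
  rw [norm_one, mul_one, Real.norm_eq_abs, abs_le]
  have hRz : dawsonRemainder z = dawsonPrimitive z - log z / 2 + dawson z / (2 * z) := rfl
  constructor <;> linarith [le_abs_self (dawsonRemainder 1), neg_abs_le (dawsonRemainder 1)]

lemma tendsto_dawsonPrimitive_div_log :
    Tendsto (fun z => dawsonPrimitive z / log z) atTop (nhds (1 / 2)) := by
  have h_inv : Tendsto (fun z => (log z)⁻¹) atTop (nhds 0) :=
    tendsto_log_atTop.inv_tendsto_atTop
  have h0 : Tendsto (fun z => (dawsonPrimitive z - log z / 2) / log z) atTop (nhds 0) := by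
    simpa only [div_eq_mul_inv, one_mul] using
      (isBigO_dawsonPrimitive_sub_log.mul (Asymptotics.isBigO_refl _ atTop)).trans_tendsto
        (by simpa only [one_mul] using h_inv)
  have h := h0.const_add (1 / 2 : ℝ)
  rw [add_zero] at h
  refine h.congr' ?_
  filter_upwards [eventually_gt_atTop 1] with z hz
  have := (log_pos hz).ne'
  field_simp
  ring

lemma tendsto_two_mul_abs_dawsonPrimitive_div_log :
    Tendsto (fun z => 2 * |dawsonPrimitive z| / log z) atTop (nhds 1) := by
  have h := tendsto_dawsonPrimitive_div_log.abs.const_mul 2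
  rw [abs_of_pos one_half_pos, mul_one_div_cancel two_ne_zero] at h
  refine h.congr' ?_
  filter_upwards [eventually_gt_atTop 1] with z hz
  rw [abs_div, abs_of_pos (log_pos hz), mul_div_assoc]

lemma abs_Ffun_div_mul_log {α₂ : ℝ} (hα₂ : 0 < α₂) (z : ℝ) :
    |Ffun α₂ z| / (α₂ * log |z|) = 2 * |dawsonPrimitive (|z|)| / log |z| := by
  have h : |Ffun α₂ z| = α₂ * (2 * |dawsonPrimitive (|z|)|) := by
    rw [dawsonPrimitive_abs, Ffun, ← dawsonPrimitive, abs_mul, abs_mul, abs_neg, abs_two,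
      abs_of_pos hα₂]
    ring
  rw [h, mul_div_mul_left _ _ hα₂.ne']

/-- Proposition 4.2, first asymptotic: `|F(z)|/(α₂·log|z|) → 1` as `|z| → ∞`. -/
theorem Ffun_log_asymptotics (α₂ : ℝ) (hα₂ : 0 < α₂) :
    Tendsto (fun z : ℝ => |Ffun α₂ z| / (α₂ * Real.log |z|)) (cocompact ℝ) (nhds 1) := by
  simp_rw [abs_Ffun_div_mul_log hα₂]
  exact tendsto_two_mul_abs_dawsonPrimitive_div_log.comp (tendsto_norm_cocompact_atTop (E := ℝ))
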